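/- Let X and Y be nontrivial real Banach spaces, let H be a closed linear subspace of L(X,Y) containing all finite rank operators, and let δ > 0. If H (with the induced operator norm) is δ-average rough and Y is non-rough, then the dual space X* is δ-average rough. -/

import Mathlib

open scoped BigOperators

/-- A Banach space `Z` is `δ`-average rough. -/
def IsAverageRough (Z : Type*) [NormedAddCommGroup Z] (δ : ℝ) : Prop :=
  ∀ n : ℕ, 0 < n → ∀ x : Fin n → Z, (∀ i, ‖x i‖ = 1) →
    ∀ ε > (0 : ℝ), ∀ η > (0 : ℝ), ∃ y : Z, 0 < ‖y‖ ∧ ‖y‖ < η ∧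
      (δ - ε) * ‖y‖ ≤ (1 / (n : ℝ)) * ∑ i, (‖x i + y‖ + ‖x i - y‖) - 2

/-- A Banach space `Z` is `δ`-rough. -/
def IsRough (Z : Type*) [NormedAddCommGroup Z] (δ : ℝ) : Prop :=
  ∀ x : Z, ‖x‖ = 1 →
    ∀ ε > (0 : ℝ), ∀ η > (0 : ℝ), ∃ y : Z, 0 < ‖y‖ ∧ ‖y‖ < η ∧
      (δ - ε) * ‖y‖ ≤ ‖x + y‖ + ‖x - y‖ - 2

/-- A Banach space `Z` is non-rough if it is `ε`-rough for no `ε > 0`. -/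
def NonRough (Z : Type*) [NormedAddCommGroup Z] : Prop :=
  ¬ ∃ ε > (0 : ℝ), IsRough Z ε

/-- A Banach space `Z` is octahedral. -/
def Octahedral (Z : Type*) [NormedAddCommGroup Z] : Prop :=
  ∀ (n : ℕ) (x : Fin n → Z), (∀ i, ‖x i‖ = 1) →
    ∀ ε > (0 : ℝ), ∃ y : Z, ‖y‖ = 1 ∧ ∀ i, 2 - ε ≤ ‖x i + y‖

/-- A Banach space `Z` is alternatively octahedral. -/
def AlternativelyOctahedral (Z : Type*) [NormedAddCommGroup Z] : Prop :=
  ∀ (n : ℕ) (x : Fin n → Z), (∀ i, ‖x i‖ = 1) →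
    ∀ ε > (0 : ℝ), ∃ y : Z, ‖y‖ = 1 ∧ ∀ i, 2 - ε ≤ max ‖x i + y‖ ‖x i - y‖

/-- A Banach space `X` is weakly `δ`-average rough: every non-empty relatively weak*
open subset of the closed unit ball of the dual has diameter at least `δ`. -/
def WeaklyAverageRough (X : Type*) [NormedAddCommGroup X] [NormedSpace ℝ X] (δ : ℝ) : Prop :=
  ∀ V : Set (WeakDual ℝ X), IsOpen V →
    ∀ U : Set (StrongDual ℝ X),
      U = {f : StrongDual ℝ X | ‖f‖ ≤ 1} ∩
            {f : StrongDual ℝ X | StrongDual.toWeakDual f ∈ V} →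
      U.Nonempty → δ ≤ Metric.diam U

/-!
Fix `θ > 0`. Since `Y` is non-rough, it has a unit vector `y₀` at which the norm is `θ`-close to
being differentiable; let `f₀` be a norming functional of `y₀`. Then the map `x ↦ x ⊗ y₀` embeds
`X*` isometrically into `H`, and for small `S ∈ H` the norm `‖x ⊗ y₀ ± S‖` exceeds
`‖x ± f₀ ∘ S‖` by at most `θ ‖S‖`. Hence a small `S` witnessing the average roughness of `H` at
the rank-one operators `xᵢ ⊗ y₀` yields the witness `f₀ ∘ S` for the average roughness of `X*`
at the `xᵢ`, with a loss of `2θ` in the constant.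
-/

/-- The quantity that `IsAverageRough` bounds from below. -/
noncomputable def averageDeviation {Z : Type*} [NormedAddCommGroup Z] {n : ℕ} (x : Fin n → Z)
    (y : Z) : ℝ :=
  (1 / (n : ℝ)) * ∑ i, (‖x i + y‖ + ‖x i - y‖) - 2

section AverageDeviation

variable {Z : Type*} [NormedAddCommGroup Z] {n : ℕ} {x : Fin n → Z}

lemma averageDeviation_eq (hn : 0 < n) (y : Z) :
    averageDeviation x y = (∑ i, (‖x i + y‖ + ‖x i - y‖ - 2)) / n := by
  have hn' : (n : ℝ) ≠ 0 := by positivity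
  rw [averageDeviation, Finset.sum_sub_distrib, Finset.sum_const, Finset.card_univ,
    Fintype.card_fin, nsmul_eq_mul]
  field_simp

lemma averageDeviation_le_add_of_forall {W : Type*} [NormedAddCommGroup W] {y : Z}
    {u : Fin n → W} {s : W} {c : ℝ} (hn : 0 < n)
    (h : ∀ i, ‖u i + s‖ + ‖u i - s‖ ≤ ‖x i + y‖ + ‖x i - y‖ + c) :
    averageDeviation u s ≤ averageDeviation x y + c := by
  have hn' : (0 : ℝ) < n := by exact_mod_cast hn
  rw [averageDeviation_eq hn, averageDeviation_eq hn, div_add' _ _ _ hn'.ne',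
    div_le_div_iff_of_pos_right hn']
  calc ∑ i, (‖u i + s‖ + ‖u i - s‖ - 2) ≤ ∑ i, (‖x i + y‖ + ‖x i - y‖ - 2 + c) :=
        Finset.sum_le_sum fun i _ => by linarith [h i]
    _ = ∑ i, (‖x i + y‖ + ‖x i - y‖ - 2) + c * n := by
        simp [Finset.sum_add_distrib, mul_comm]

lemma averageDeviation_le_two_mul_norm (hn : 0 < n) (hx : ∀ i, ‖x i‖ = 1) (y : Z) :
    averageDeviation x y ≤ 2 * ‖y‖ := by
  have hn' : (0 : ℝ) < n := by exact_mod_cast hn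
  rw [averageDeviation_eq hn, div_le_iff₀ hn']
  calc ∑ i, (‖x i + y‖ + ‖x i - y‖ - 2) ≤ ∑ _i : Fin n, 2 * ‖y‖ :=
        Finset.sum_le_sum fun i _ => by linarith [norm_add_le (x i) y, norm_sub_le (x i) y, hx i]
    _ = 2 * ‖y‖ * n := by simp [mul_comm]

lemma averageDeviation_nonneg [NormedSpace ℝ Z] (hn : 0 < n) (hx : ∀ i, ‖x i‖ = 1) (y : Z) :
    0 ≤ averageDeviation x y := by
  rw [averageDeviation_eq hn]
  refine div_nonneg (Finset.sum_nonneg fun i _ => ?_) n.cast_nonneg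
  have := norm_add_le (x i + y) (x i - y)
  rw [add_add_sub_cancel, ← two_smul ℝ, norm_smul, hx i] at this
  norm_num at this
  linarith

lemma exists_averageDeviation_ge_of_nonpos [NormedSpace ℝ Z] (hn : 0 < n) (hx : ∀ i, ‖x i‖ = 1)
    {c η : ℝ} (hc : c ≤ 0) (hη : 0 < η) :
    ∃ y : Z, 0 < ‖y‖ ∧ ‖y‖ < η ∧ c * ‖y‖ ≤ averageDeviation x y := by
  refine ⟨(η / 2) • x ⟨0, hn⟩, ?_, ?_, ?_⟩ <;>
    simp only [norm_smul, hx, Real.norm_eq_abs, abs_of_pos (half_pos hη), mul_one]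
  · positivity
  · linarith
  · exact (mul_nonpos_of_nonpos_of_nonneg hc (by positivity)).trans
      (averageDeviation_nonneg hn hx _)

lemma norm_pos_and_le_averageDeviation (hn : 0 < n) (hx : ∀ i, ‖x i‖ = 1) {y : Z} {c c' s : ℝ}
    (hc : c ≤ c') (hc' : 0 < c') (hs : 0 < s) (hys : ‖y‖ ≤ s)
    (h : c' * s ≤ averageDeviation x y) : 0 < ‖y‖ ∧ c * ‖y‖ ≤ averageDeviation x y := by
  constructor
  · linarith [mul_pos hc' hs, averageDeviation_le_two_mul_norm hn hx y]
  · calc c * ‖y‖ ≤ c' * s := by nlinarith [norm_nonneg y]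
      _ ≤ averageDeviation x y := h

end AverageDeviation

def IsNearlySmoothAt {Y : Type*} [NormedAddCommGroup Y] (θ η₀ : ℝ) (y₀ : Y) : Prop :=
  ∀ z : Y, 0 < ‖z‖ → ‖z‖ < η₀ → ‖y₀ + z‖ + ‖y₀ - z‖ - 2 ≤ θ * ‖z‖

lemma NonRough.exists_isNearlySmoothAt {Y : Type*} [NormedAddCommGroup Y] (hY : NonRough Y)
    {θ : ℝ} (hθ : 0 < θ) : ∃ y₀ : Y, ‖y₀‖ = 1 ∧ ∃ η₀ > 0, IsNearlySmoothAt θ η₀ y₀ := by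
  have hθY : ¬ IsRough Y θ := fun h => hY ⟨θ, hθ, h⟩
  simp only [IsRough, not_forall, not_exists, not_and, not_le] at hθY
  obtain ⟨y₀, hy₀, ρ, hρ, η₀, hη₀, hsmooth⟩ := hθY
  exact ⟨y₀, hy₀, η₀, hη₀, fun z hz hzη => by nlinarith [hsmooth z hz hzη]⟩

namespace IsNearlySmoothAt

variable {Y : Type*} [NormedAddCommGroup Y] [NormedSpace ℝ Y] {θ η₀ : ℝ} {y₀ : Y}
  {f₀ : StrongDual ℝ Y}

lemma norm_add_le (h : IsNearlySmoothAt θ η₀ y₀) (hy₀ : ‖y₀‖ = 1) (hf₀ : ‖f₀‖ ≤ 1)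
    (hfy : f₀ y₀ = 1) {w : Y} (hw : ‖w‖ < η₀) : ‖y₀ + w‖ ≤ 1 + f₀ w + θ * ‖w‖ := by
  rcases (norm_nonneg w).eq_or_lt with hw0 | hw0
  · simp [norm_eq_zero.mp hw0.symm, hy₀]
  have hsub : f₀ (y₀ - w) ≤ ‖y₀ - w‖ :=
    (le_abs_self _).trans ((f₀.le_opNorm _).trans (mul_le_of_le_one_left (norm_nonneg _) hf₀))
  rw [map_sub, hfy] at hsub
  linarith [h w hw0 hw]

lemma norm_smul_add_le (h : IsNearlySmoothAt θ η₀ y₀) (hy₀ : ‖y₀‖ = 1) (hf₀ : ‖f₀‖ ≤ 1)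
    (hfy : f₀ y₀ = 1) {a : ℝ} (ha : a ≠ 0) {z : Y} (hz : ‖z‖ < η₀ * |a|) :
    ‖a • y₀ + z‖ ≤ |a + f₀ z| + θ * ‖z‖ := by
  have ha' : 0 < |a| := abs_pos.mpr ha
  have hw : ‖a⁻¹ • z‖ < η₀ := by
    rw [norm_smul, norm_inv, Real.norm_eq_abs, inv_mul_lt_iff₀ ha', mul_comm]
    exact hz
  calc ‖a • y₀ + z‖ = |a| * ‖y₀ + a⁻¹ • z‖ := by
        rw [← Real.norm_eq_abs, ← norm_smul, smul_add, smul_inv_smul₀ ha]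
    _ ≤ |a| * (1 + f₀ (a⁻¹ • z) + θ * ‖a⁻¹ • z‖) :=
        mul_le_mul_of_nonneg_left (h.norm_add_le hy₀ hf₀ hfy hw) ha'.le
    _ = (|a| * a⁻¹) * (a + f₀ z) + θ * ‖z‖ := by
        rw [map_smul, smul_eq_mul, norm_smul, norm_inv, Real.norm_eq_abs]
        field_simp
    _ ≤ |a + f₀ z| + θ * ‖z‖ := by
        gcongr
        refine (le_abs_self _).trans_eq ?_
        rw [abs_mul, abs_mul, abs_abs, abs_inv, mul_inv_cancel₀ ha'.ne', one_mul]

variable {X : Type*} [NormedAddCommGroup X] [NormedSpace ℝ X]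

lemma norm_smulRight_add_le (h : IsNearlySmoothAt θ η₀ y₀) (hy₀ : ‖y₀‖ = 1) (hf₀ : ‖f₀‖ ≤ 1)
    (hfy : f₀ y₀ = 1) (hθ : 0 ≤ θ) {x : StrongDual ℝ X} (hx : ‖x‖ = 1) {S : X →L[ℝ] Y}
    (hSη : ‖S‖ < η₀ / 2) (hS : ‖S‖ ≤ 1 / 4) :
    ‖x.smulRight y₀ + S‖ ≤ ‖x + f₀.comp S‖ + θ * ‖S‖ := by
  have hfS : ‖f₀.comp S‖ ≤ ‖S‖ :=
    (f₀.opNorm_comp_le S).trans (mul_le_of_le_one_left (norm_nonneg _) hf₀)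
  have hlow : 1 - ‖S‖ ≤ ‖x + f₀.comp S‖ := by
    have := norm_sub_le (x + f₀.comp S) (f₀.comp S)
    rw [add_sub_cancel_right, hx] at this
    linarith
  have hθS : 0 ≤ θ * ‖S‖ := mul_nonneg hθ (norm_nonneg S)
  refine ContinuousLinearMap.opNorm_le_of_unit_norm (by linarith) fun v hv => ?_
  have hSv : ‖S v‖ ≤ ‖S‖ := (S.le_opNorm v).trans_eq (by rw [hv, mul_one])
  change ‖x v • y₀ + S v‖ ≤ _
  rcases lt_or_ge |x v| (1 / 2) with hsmall | hlarge
  · calc ‖x v • y₀ + S v‖ ≤ |x v| + ‖S‖ := by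
          grw [_root_.norm_add_le, norm_smul, hy₀, mul_one, Real.norm_eq_abs, hSv]
      _ ≤ ‖x + f₀.comp S‖ + θ * ‖S‖ := by linarith
  · have hxv : |x v + f₀ (S v)| ≤ ‖x + f₀.comp S‖ :=
      ((x + f₀.comp S).le_opNorm v).trans_eq (by rw [hv, mul_one])
    have hSv' : ‖S v‖ < η₀ * |x v| := by
      have hη₀ : 0 ≤ η₀ := by linarith [norm_nonneg S]
      nlinarith [mul_le_mul_of_nonneg_left hlarge hη₀]
    calc ‖x v • y₀ + S v‖ ≤ |x v + f₀ (S v)| + θ * ‖S v‖ :=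
          h.norm_smul_add_le hy₀ hf₀ hfy (abs_pos.mp (by linarith)) hSv'
      _ ≤ ‖x + f₀.comp S‖ + θ * ‖S‖ := by gcongr

lemma averageDeviation_smulRight_le (h : IsNearlySmoothAt θ η₀ y₀) (hy₀ : ‖y₀‖ = 1)
    (hf₀ : ‖f₀‖ ≤ 1) (hfy : f₀ y₀ = 1) (hθ : 0 ≤ θ) {n : ℕ} (hn : 0 < n)
    {x : Fin n → StrongDual ℝ X} (hx : ∀ i, ‖x i‖ = 1) {S : X →L[ℝ] Y}
    (hSη : ‖S‖ < η₀ / 2) (hS : ‖S‖ ≤ 1 / 4) :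
    averageDeviation (fun i => (x i).smulRight y₀) S ≤
      averageDeviation x (f₀.comp S) + 2 * θ * ‖S‖ :=
  averageDeviation_le_add_of_forall hn fun i => by
    have hplus := h.norm_smulRight_add_le hy₀ hf₀ hfy hθ (hx i) hSη hS
    have hminus := h.norm_smulRight_add_le hy₀ hf₀ hfy hθ (hx i) (S := -S)
      (by rwa [norm_neg]) (by rwa [norm_neg])
    rw [ContinuousLinearMap.comp_neg, ← sub_eq_add_neg, ← sub_eq_add_neg, norm_neg] at hminus
    linarith

end IsNearlySmoothAt

theorem stmt9
    (X Y : Type*) [NormedAddCommGroup X] [NormedSpace ℝ X]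
    [NormedAddCommGroup Y] [NormedSpace ℝ Y]
    (H : Submodule ℝ (X →L[ℝ] Y))
    (hHfin : ∀ T : X →L[ℝ] Y, FiniteDimensional ℝ (LinearMap.range (T : X →ₗ[ℝ] Y)) → T ∈ H)
    (δ : ℝ)
    (hH : IsAverageRough H δ) (hY : NonRough Y) :
    IsAverageRough (StrongDual ℝ X) δ := by
  intro n hn x hx ε hε η hη
  rcases le_or_gt δ ε with hδε | hεδ
  · exact exists_averageDeviation_ge_of_nonpos hn hx (by linarith) hη
  obtain ⟨y₀, hy₀, η₀, hη₀, hsmooth⟩ := hY.exists_isNearlySmoothAt (θ := ε / 8) (by positivity)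
  obtain ⟨f₀, hf₀, hfy⟩ := exists_dual_vector ℝ y₀ (by simp [hy₀])
  rw [hy₀, RCLike.ofReal_one] at hfy
  let T : Fin n → H := fun i => ⟨(x i).smulRight y₀, hHfin _ <| by
    rw [ContinuousLinearMap.range_smulRight_apply (norm_ne_zero_iff.mp (by simp [hx i]))]
    infer_instance⟩
  obtain ⟨S, hS0, hSη, hSdev⟩ := hH n hn T
    (fun i => by simp [T, ContinuousLinearMap.norm_smulRight_apply, hx i, hy₀])
    (ε / 2) (by positivity) (min η (min (η₀ / 2) (1 / 4))) (by positivity)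
  simp only [lt_min_iff] at hSη
  have hdev : averageDeviation T S ≤
      averageDeviation x (f₀.comp (S : X →L[ℝ] Y)) + 2 * (ε / 8) * ‖S‖ :=
    hsmooth.averageDeviation_smulRight_le hy₀ hf₀.le hfy (by positivity) hn hx hSη.2.1
      hSη.2.2.le
  have hyS : ‖f₀.comp (S : X →L[ℝ] Y)‖ ≤ ‖S‖ :=
    (f₀.opNorm_comp_le _).trans (mul_le_of_le_one_left (norm_nonneg _) hf₀.le)
  change (δ - ε / 2) * ‖S‖ ≤ averageDeviation T S at hSdev
  obtain ⟨hy0, hdev'⟩ := norm_pos_and_le_averageDeviation hn hx (c := δ - ε) (c' := δ - 3 / 4 * ε)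
    (by linarith) (by linarith) hS0 hyS (by linarith)
  exact ⟨f₀.comp (S : X →L[ℝ] Y), hy0, hyS.trans_lt hSη.1, hdev'⟩
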